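/- Let G be a group, H ◁ G of finite index. Let φ₁, φ₂ be endomorphisms of the forgetful functor on a suitable category C of representations of G. If φ₁ or φ₂ commutes with all H-intertwiners, then r_H^G(φ₁φ₂) = r_H^G(φ₁) r_H^G(φ₂), where r_H^G(φ)(π) = e₁ ∘ φ(Ind_H^G π) ∘ e₁*. In particular r_H^G is an algebra homomorphism on the subalgebra of H-supported elements. -/

import Mathlib

noncomputable section

open scoped TensorProduct DirectSum

universe u

section Defs

variable {G : Type u} [Group G]

/-- The submodule of equivariant linear maps between two representations. -/
def equivHom {M : Type*} [Monoid M] {V₁ V₂ : Type*}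
    [AddCommGroup V₁] [Module ℂ V₁] [AddCommGroup V₂] [Module ℂ V₂]
    (ρ₁ : Representation ℂ M V₁) (ρ₂ : Representation ℂ M V₂) :
    Submodule ℂ (V₁ →ₗ[ℂ] V₂) where
  carrier := {f | ∀ (m : M) (v : V₁), f (ρ₁ m v) = ρ₂ m (f v)}
  add_mem' := by intro a b ha hb m v; simp_all
  zero_mem' := by intro m v; simp
  smul_mem' := by intro c f hf m v; simp_all

instance equivHom.instAddCommGroup {M : Type*} [Monoid M] {V₁ V₂ : Type*}
    [AddCommGroup V₁] [Module ℂ V₁] [AddCommGroup V₂] [Module ℂ V₂]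
    (ρ₁ : Representation ℂ M V₁) (ρ₂ : Representation ℂ M V₂) :
    AddCommGroup ↥(equivHom ρ₁ ρ₂) :=
  Submodule.addCommGroup _

instance equivHom.instModule {M : Type*} [Monoid M] {V₁ V₂ : Type*}
    [AddCommGroup V₁] [Module ℂ V₁] [AddCommGroup V₂] [Module ℂ V₂]
    (ρ₁ : Representation ℂ M V₁) (ρ₂ : Representation ℂ M V₂) :
    Module ℂ ↥(equivHom ρ₁ ρ₂) :=
  Submodule.module _

/-- Twist of a representation by a `ℂˣ`-valued character. -/
def twist {V : Type*} [AddCommGroup V] [Module ℂ V]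
    (ρ : Representation ℂ G V) (χ : G →* ℂˣ) : Representation ℂ G V where
  toFun g := (χ g : ℂ) • ρ g
  map_one' := by simp
  map_mul' g₁ g₂ := by
    ext v
    simp [Module.End.mul_apply, LinearMap.smul_apply, map_mul, smul_smul,
      map_smul, mul_comm, mul_left_comm]

@[simp] lemma twist_apply {V : Type*} [AddCommGroup V] [Module ℂ V]
    (ρ : Representation ℂ G V) (χ : G →* ℂˣ) (g : G) (v : V) :
    twist ρ χ g v = (χ g : ℂ) • ρ g v := rfl

/-- Characters of `G` trivial on `H`, i.e. characters of `G/H`. -/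
def TrivOn (H : Subgroup G) : Type u := {χ : G →* ℂˣ // ∀ h ∈ H, χ h = 1}

/-- Irreducibility of a representation. -/
def IsIrreducibleRep {M : Type*} [Monoid M] {V : Type*} [AddCommGroup V] [Module ℂ V]
    (ρ : Representation ℂ M V) : Prop :=
  (∃ v : V, v ≠ 0) ∧
    ∀ W : Submodule ℂ V, (∀ (m : M) (v : V), v ∈ W → ρ m v ∈ W) → W = ⊥ ∨ W = ⊤

/-- Equivalence (isomorphism) of representations. -/
def RepEquiv {M : Type*} [Monoid M] {V₁ V₂ : Type*}
    [AddCommGroup V₁] [Module ℂ V₁] [AddCommGroup V₂] [Module ℂ V₂]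
    (ρ₁ : Representation ℂ M V₁) (ρ₂ : Representation ℂ M V₂) : Prop :=
  ∃ e : V₁ ≃ₗ[ℂ] V₂, ∀ (m : M) (v : V₁), e (ρ₁ m v) = ρ₂ m (e v)

/-- Restriction of a representation of `G` to a subgroup `H`. -/
def resR (H : Subgroup G) {V : Type*} [AddCommGroup V] [Module ℂ V]
    (ρ : Representation ℂ G V) : Representation ℂ H V := ρ.comp H.subtype

@[simp] lemma resR_apply (H : Subgroup G) {V : Type*} [AddCommGroup V] [Module ℂ V]
    (ρ : Representation ℂ G V) (h : H) : resR H ρ h = ρ ↑h := rfl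

end Defs
section Ind

variable {G : Type u} [Group G] (H : Subgroup G)
variable {V : Type u} [AddCommGroup V] [Module ℂ V]

/-- The space of the induced representation: functions `w : G → V` with
`w (h * g) = ρ h (w g)` for `h ∈ H`. -/
def IndSpace (ρ : Representation ℂ H V) : Submodule ℂ (G → V) where
  carrier := {w | ∀ (h : H) (g : G), w (↑h * g) = ρ h (w g)}
  add_mem' := by intro a b ha hb h g; simp_all
  zero_mem' := by intro h g; simp
  smul_mem' := by intro c a ha h g; simp_all

/-- The induced representation `Ind_H^G ρ`, acting by right translation. -/
def indRep (ρ : Representation ℂ H V) : Representation ℂ G ↥(IndSpace H ρ) where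
  toFun g :=
    { toFun := fun w => ⟨fun x => (w : G → V) (x * g), by
        intro h x
        have := w.2 h (x * g)
        simpa [mul_assoc] using this⟩
      map_add' := by intro a b; apply Subtype.ext; funext x; simp
      map_smul' := by intro c a; apply Subtype.ext; funext x; simp }
  map_one' := by
    apply LinearMap.ext; intro w; apply Subtype.ext; funext x; simp
  map_mul' := by
    intro g₁ g₂
    apply LinearMap.ext; intro w; apply Subtype.ext; funext x
    simp [Module.End.mul_apply, mul_assoc]

@[simp] lemma indRep_apply (ρ : Representation ℂ H V) (g : G) (w : ↥(IndSpace H ρ)) (x : G) :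
    ((indRep H ρ g w : ↥(IndSpace H ρ)) : G → V) x = (w : G → V) (x * g) := rfl

/-- Evaluation at `g` of functions in the induced representation. -/
def evalAt (ρ : Representation ℂ H V) (g : G) : ↥(IndSpace H ρ) →ₗ[ℂ] V where
  toFun w := (w : G → V) g
  map_add' := by intro a b; simp
  map_smul' := by intro c a; simp

@[simp] lemma evalAt_apply (ρ : Representation ℂ H V) (g : G) (w : ↥(IndSpace H ρ)) :
    evalAt H ρ g w = (w : G → V) g := rfl

/-- Extension by zero: the section `e_g^*` of `evalAt`, supported on the coset `H g`. -/
def extAt [DecidablePred (· ∈ H)] (ρ : Representation ℂ H V) (g : G) :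
    V →ₗ[ℂ] ↥(IndSpace H ρ) where
  toFun v := ⟨fun x => if hx : x * g⁻¹ ∈ H then ρ ⟨x * g⁻¹, hx⟩ v else 0, by
    intro h x
    dsimp only
    by_cases hx : x * g⁻¹ ∈ H
    · have hx' : (↑h * x) * g⁻¹ ∈ H := by
        have e : (↑h * x) * g⁻¹ = ↑h * (x * g⁻¹) := by group
        rw [e]; exact H.mul_mem h.2 hx
      rw [dif_pos hx', dif_pos hx]
      have e2 : (⟨(↑h * x) * g⁻¹, hx'⟩ : H) = h * ⟨x * g⁻¹, hx⟩ := by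
        apply Subtype.ext; simp [mul_assoc]
      rw [e2, map_mul]
      rfl
    · have hx' : ¬ ((↑h * x) * g⁻¹ ∈ H) := by
        intro hc
        apply hx
        have e : x * g⁻¹ = (↑h)⁻¹ * ((↑h * x) * g⁻¹) := by group
        rw [e]; exact H.mul_mem (H.inv_mem h.2) hc
      rw [dif_neg hx', dif_neg hx, map_zero]⟩
  map_add' := by
    intro a b; apply Subtype.ext; funext x
    by_cases hx : x * g⁻¹ ∈ H <;> simp [hx]
  map_smul' := by
    intro c a; apply Subtype.ext; funext x
    by_cases hx : x * g⁻¹ ∈ H <;> simp [hx]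

/-- The projector `p_g = e_g^* ∘ e_g` onto functions supported on `H g`. -/
def projAt [DecidablePred (· ∈ H)] (ρ : Representation ℂ H V) (g : G) :
    ↥(IndSpace H ρ) →ₗ[ℂ] ↥(IndSpace H ρ) :=
  extAt H ρ g ∘ₗ evalAt H ρ g

/-- Functoriality of induction on `H`-equivariant maps. -/
def indMap {V₁ V₂ : Type u} [AddCommGroup V₁] [Module ℂ V₁] [AddCommGroup V₂] [Module ℂ V₂]
    (ρ₁ : Representation ℂ H V₁) (ρ₂ : Representation ℂ H V₂)
    (α : V₁ →ₗ[ℂ] V₂) (hα : ∀ (h : H) (v : V₁), α (ρ₁ h v) = ρ₂ h (α v)) :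
    ↥(IndSpace H ρ₁) →ₗ[ℂ] ↥(IndSpace H ρ₂) where
  toFun w := ⟨fun x => α ((w : G → V₁) x), by
    intro h x
    dsimp only
    rw [w.2 h x, hα]⟩
  map_add' := by intro a b; apply Subtype.ext; funext x; simp
  map_smul' := by intro c a; apply Subtype.ext; funext x; simp

/-- Conjugate representation `π^g`, given by `h ↦ π (g⁻¹ h g)`. -/
def conjRep [hN : H.Normal] (ρ : Representation ℂ H V) (g : G) : Representation ℂ H V :=
  ρ.comp
    { toFun := fun h => ⟨g⁻¹ * ↑h * g, by simpa using hN.conj_mem ↑h h.2 g⁻¹⟩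
      map_one' := by apply Subtype.ext; simp
      map_mul' := by
        intro a b; apply Subtype.ext
        show g⁻¹ * ↑(a * b) * g = (g⁻¹ * ↑a * g) * (g⁻¹ * ↑b * g)
        rw [Subgroup.coe_mul]; group }

@[simp] lemma conjRep_apply [H.Normal] (ρ : Representation ℂ H V) (g : G) (h : H) (v : V) :
    conjRep H ρ g h v = ρ ⟨g⁻¹ * ↑h * g, by simpa using ‹H.Normal›.conj_mem ↑h h.2 g⁻¹⟩ v := rfl

attribute [irreducible] indRep

end Ind
section Bundled

/-- A bundled (complex, linear) representation of a group `M`. -/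
structure RepOn (M : Type u) [Group M] : Type (u + 1) where
  V : Type u
  [acg : AddCommGroup V]
  [mod : Module ℂ V]
  ρ : Representation ℂ M V

attribute [instance] RepOn.acg RepOn.mod

variable {G : Type u} [Group G]

/-- The bundled induced representation. -/
def indRepOn (H : Subgroup G) (σ : RepOn ↥H) : RepOn G :=
  { V := ↥(IndSpace H σ.ρ), ρ := indRep H σ.ρ }

/-- The bundled restriction to a subgroup. -/
def resRepOn (H : Subgroup G) (P : RepOn G) : RepOn ↥H :=
  { V := P.V, ρ := resR H P.ρ }

/-- The bundled twist by a character trivial on `H`. -/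
def twistRepOn {H : Subgroup G} (P : RepOn G) (χ : TrivOn H) : RepOn G :=
  { V := P.V, ρ := twist P.ρ χ.1 }

/-- A family of endomorphisms (one for each bundled representation) commuting with all
intertwiners between members of `C`: an endomorphism of the forgetful functor on `C`. -/
def Commutes {M : Type u} [Group M] (C : Set (RepOn M))
    (φ : ∀ π : RepOn M, π.V →ₗ[ℂ] π.V) : Prop :=
  ∀ π₁ ∈ C, ∀ π₂ ∈ C, ∀ α : π₁.V →ₗ[ℂ] π₂.V,
    (∀ m : M, α ∘ₗ π₁.ρ m = π₂.ρ m ∘ₗ α) → α ∘ₗ φ π₁ = φ π₂ ∘ₗ α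

/-- Commutation with all `H`-intertwiners between members of `C` (support in `H`). -/
def HCommutes (H : Subgroup G) (C : Set (RepOn G))
    (φ : ∀ π : RepOn G, π.V →ₗ[ℂ] π.V) : Prop :=
  ∀ π₁ ∈ C, ∀ π₂ ∈ C, ∀ α : π₁.V →ₗ[ℂ] π₂.V,
    (∀ h : H, α ∘ₗ π₁.ρ ↑h = π₂.ρ ↑h ∘ₗ α) → α ∘ₗ φ π₁ = φ π₂ ∘ₗ α

/-- The direct sum of a family of bundled representations. -/
def dsumRepOn {M : Type u} [Group M] {ι : Type u} [DecidableEq ι] (f : ι → RepOn M) :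
    RepOn M where
  V := ⨁ i, (f i).V
  ρ :=
    { toFun := fun m => DFinsupp.mapRange.linearMap (fun i => (f i).ρ m)
      map_one' := by
        have : (fun i => (f i).ρ (1 : M)) = fun i => (LinearMap.id : (f i).V →ₗ[ℂ] (f i).V) := by
          funext i; rw [map_one]; rfl
        try dsimp only
        rw [this, DFinsupp.mapRange.linearMap_id]
        rfl
      map_mul' := by
        intro m₁ m₂
        have : (fun i => (f i).ρ (m₁ * m₂)) =
            fun i => ((f i).ρ m₁) ∘ₗ ((f i).ρ m₂) := by
          funext i; rw [map_mul]; rfl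
        try dsimp only
        rw [this, DFinsupp.mapRange.linearMap_comp]
        rfl }

/-- Closure of a class of representations under subobjects, quotients and direct sums. -/
def ClosedRep {M : Type u} [Group M] (C : Set (RepOn M)) : Prop :=
  (∀ P ∈ C, ∀ σ : RepOn M, (∃ f : σ.V →ₗ[ℂ] P.V, Function.Injective f ∧
      ∀ (m : M) (v : σ.V), f (σ.ρ m v) = P.ρ m (f v)) → σ ∈ C) ∧
  (∀ P ∈ C, ∀ σ : RepOn M, (∃ f : P.V →ₗ[ℂ] σ.V, Function.Surjective f ∧
      ∀ (m : M) (v : P.V), f (P.ρ m v) = σ.ρ m (f v)) → σ ∈ C) ∧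
  (∀ (ι : Type u) (_ : DecidableEq ι) (f : ι → RepOn M),
      (∀ i, f i ∈ C) → dsumRepOn f ∈ C)

/-- The Fourier transform of a finitely supported function at a representation. -/
def fourierT {M : Type u} [Group M] (f : M →₀ ℂ) {V : Type*} [AddCommGroup V] [Module ℂ V]
    (ρ : Representation ℂ M V) : V →ₗ[ℂ] V :=
  f.sum fun g c => c • (ρ g : V →ₗ[ℂ] V)

end Bundled

/-! If `φ` commutes with the `H`-intertwiner `p₁ = e₁* ∘ e₁` of `Ind_H^G σ`, then
`e₁ ∘ φ = e₁ ∘ p₁ ∘ φ = e₁ ∘ φ ∘ p₁` (resp. `φ ∘ e₁* = φ ∘ p₁ ∘ e₁* = p₁ ∘ φ ∘ e₁*`), so a factor `p₁` may be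
inserted between `φ₁` and `φ₂`; expanding it splits `e₁ ∘ φ₁ ∘ φ₂ ∘ e₁*` into the product of the
two compressions. -/

section Compression

variable {R M N : Type*} [Semiring R] [AddCommMonoid M] [Module R M] [AddCommMonoid N]
  [Module R N] {e : M →ₗ[R] N} {s : N →ₗ[R] M}

theorem LinearMap.compress_comp_of_comm_left (hes : e ∘ₗ s = LinearMap.id)
    {φ₁ : M →ₗ[R] M} (hφ₁ : φ₁ ∘ₗ (s ∘ₗ e) = (s ∘ₗ e) ∘ₗ φ₁) (φ₂ : M →ₗ[R] M) :
    e ∘ₗ (φ₁ ∘ₗ φ₂) ∘ₗ s = (e ∘ₗ φ₁ ∘ₗ s) ∘ₗ (e ∘ₗ φ₂ ∘ₗ s) := by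
  ext v
  have := congr(e ($hφ₁ (φ₂ (s v))))
  simp only [LinearMap.comp_apply] at this ⊢
  rw [this, ← LinearMap.comp_apply e s, hes, LinearMap.id_apply]

theorem LinearMap.compress_comp_of_comm_right (hes : e ∘ₗ s = LinearMap.id)
    (φ₁ : M →ₗ[R] M) {φ₂ : M →ₗ[R] M} (hφ₂ : φ₂ ∘ₗ (s ∘ₗ e) = (s ∘ₗ e) ∘ₗ φ₂) :
    e ∘ₗ (φ₁ ∘ₗ φ₂) ∘ₗ s = (e ∘ₗ φ₁ ∘ₗ s) ∘ₗ (e ∘ₗ φ₂ ∘ₗ s) := by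
  ext v
  have := congr(e (φ₁ ($hφ₂ (s v))))
  simp only [LinearMap.comp_apply] at this ⊢
  rw [← this, ← LinearMap.comp_apply e s, hes, LinearMap.id_apply]

end Compression

section ExtAt

variable {G : Type u} [Group G] (H : Subgroup G) [DecidablePred (· ∈ H)]
variable {V : Type u} [AddCommGroup V] [Module ℂ V] (ρ : Representation ℂ H V)

theorem extAt_apply_of_mem {g x : G} (hx : x * g⁻¹ ∈ H) (v : V) :
    ((extAt H ρ g v : ↥(IndSpace H ρ)) : G → V) x = ρ ⟨x * g⁻¹, hx⟩ v :=
  dif_pos hx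

theorem extAt_apply_of_notMem {g x : G} (hx : x * g⁻¹ ∉ H) (v : V) :
    ((extAt H ρ g v : ↥(IndSpace H ρ)) : G → V) x = 0 :=
  dif_neg hx

theorem evalAt_comp_extAt (g : G) : evalAt H ρ g ∘ₗ extAt H ρ g = LinearMap.id := by
  ext v
  have hg : g * g⁻¹ ∈ H := by simp [H.one_mem]
  rw [LinearMap.comp_apply, evalAt_apply, extAt_apply_of_mem H ρ hg]
  simp_rw [mul_inv_cancel]
  exact congr($(map_one ρ) v)

theorem projAt_one_comp_indRep (h : H) :
    projAt H ρ 1 ∘ₗ indRep H ρ ↑h = indRep H ρ ↑h ∘ₗ projAt H ρ 1 := by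
  ext w x
  simp only [projAt, LinearMap.comp_apply, evalAt_apply, indRep_apply, one_mul]
  by_cases hx : x ∈ H
  · have hxh : x * ↑h * 1⁻¹ ∈ H := by simpa using H.mul_mem hx h.2
    have hw : (w : G → V) h = ρ h ((w : G → V) 1) := by simpa using w.2 h 1
    rw [extAt_apply_of_mem H ρ (by simpa using hx), extAt_apply_of_mem H ρ hxh, hw,
      ← Module.End.mul_apply, ← map_mul]
    congr 2
    ext
    simp
  · have hxh : x * ↑h * 1⁻¹ ∉ H := by simpa [H.mul_mem_cancel_right h.2] using hx
    rw [extAt_apply_of_notMem H ρ (by simpa using hx), extAt_apply_of_notMem H ρ hxh]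

end ExtAt

theorem HCommutes.projAt_one_comm {G : Type u} [Group G] {H : Subgroup G}
    [DecidablePred (· ∈ H)] {C : Set (RepOn G)} {φ : ∀ P : RepOn G, P.V →ₗ[ℂ] P.V}
    (hφ : HCommutes H C φ) {σ : RepOn ↥H} (hσ : indRepOn H σ ∈ C) :
    φ (indRepOn H σ) ∘ₗ projAt H σ.ρ 1 = projAt H σ.ρ 1 ∘ₗ φ (indRepOn H σ) :=
  (hφ _ hσ _ hσ _ (projAt_one_comp_indRep H σ.ρ)).symm

theorem statement15_general {G : Type u} [Group G] (H : Subgroup G)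
    [DecidablePred (· ∈ H)]
    (C : Set (RepOn G)) (CH : Set (RepOn ↥H))
    (hInd : ∀ σ ∈ CH, indRepOn H σ ∈ C)
    (φ₁ φ₂ : ∀ P : RepOn G, P.V →ₗ[ℂ] P.V)
    (hsupp : HCommutes H C φ₁ ∨ HCommutes H C φ₂) :
    ∀ σ ∈ CH,
      evalAt H σ.ρ 1 ∘ₗ (φ₁ (indRepOn H σ) ∘ₗ φ₂ (indRepOn H σ)) ∘ₗ extAt H σ.ρ 1 =
        (evalAt H σ.ρ 1 ∘ₗ φ₁ (indRepOn H σ) ∘ₗ extAt H σ.ρ 1) ∘ₗ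
          (evalAt H σ.ρ 1 ∘ₗ φ₂ (indRepOn H σ) ∘ₗ extAt H σ.ρ 1) := by
  intro σ hσ
  rcases hsupp with hφ₁ | hφ₂
  · exact LinearMap.compress_comp_of_comm_left (evalAt_comp_extAt H σ.ρ 1)
      (hφ₁.projAt_one_comm (hInd σ hσ)) _
  · exact LinearMap.compress_comp_of_comm_right (evalAt_comp_extAt H σ.ρ 1) _
      (hφ₂.projAt_one_comm (hInd σ hσ))

/-- (Multiplicativity of the restriction of endomorphisms.)  Let `H ◁ G`
be of finite index, `C` a class of representations of `G` and `CH` a class of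
representations of `H` with `Ind_H^G σ ∈ C` for `σ ∈ CH`.  If `φ₁` or `φ₂` commutes with
all `H`-intertwiners between members of `C` (i.e. is supported in `H`), then
`r_H^G(φ₁ φ₂) = r_H^G(φ₁) ∘ r_H^G(φ₂)`, where `r_H^G(φ)(σ) = e₁ ∘ φ(Ind_H^G σ) ∘ e₁^*`.
In particular `r_H^G` is an algebra homomorphism on the `H`-supported elements. -/
theorem statement15 {G : Type u} [Group G] (H : Subgroup G) [H.Normal] [Finite (G ⧸ H)]
    [DecidablePred (· ∈ H)]
    (C : Set (RepOn G)) (CH : Set (RepOn ↥H))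
    (hInd : ∀ σ ∈ CH, indRepOn H σ ∈ C)
    (φ₁ φ₂ : ∀ P : RepOn G, P.V →ₗ[ℂ] P.V)
    (hsupp : HCommutes H C φ₁ ∨ HCommutes H C φ₂) :
    ∀ σ ∈ CH,
      evalAt H σ.ρ 1 ∘ₗ (φ₁ (indRepOn H σ) ∘ₗ φ₂ (indRepOn H σ)) ∘ₗ extAt H σ.ρ 1 =
        (evalAt H σ.ρ 1 ∘ₗ φ₁ (indRepOn H σ) ∘ₗ extAt H σ.ρ 1) ∘ₗ
          (evalAt H σ.ρ 1 ∘ₗ φ₂ (indRepOn H σ) ∘ₗ extAt H σ.ρ 1) :=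
  statement15_general H C CH hInd φ₁ φ₂ hsupp
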